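/- arXiv:2507.12400 — 4 statements merged into one kernel-verified Lean document; each statement's English description precedes it below -/
import Mathlib

section
/- Let (X_t)_{t≥0} be a real-valued stochastic process adapted to a filtration (F_t) with X_0 = 0, whose increments satisfy −1 ≤ X_t − X_{t−1} ≤ 1 almost surely and E[X_t − X_{t−1} | F_{t−1}] ≤ −δ for all t ≥ 1, where 0 < δ ≤ 1. Fix y < 0 and z ≥ 4, and let T = min{t : X_t ≤ y or X_t ≥ z}. Then P(X_T ≥ z) ≤ exp(−δ²z/4)/(1 − exp(−δ³/4)). -/
open MeasureTheory ProbabilityTheory Real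
open scoped ENNReal

lemma exp_le_one_add_add_sq {x : ℝ} (hx : |x| ≤ 1) :
    Real.exp x ≤ 1 + x + x ^ 2 := by
  have h := Real.exp_bound hx (n := 2) (by norm_num)
  have hs : (∑ m ∈ Finset.range 2, x ^ m / (Nat.factorial m)) = 1 + x := by
    simp [Finset.sum_range_succ]
  rw [hs] at h
  have hc : ((Nat.succ 2 : ℕ) : ℝ) / ((Nat.factorial 2 : ℕ) * (2:ℕ)) = 3 / 4 := by
    norm_num [Nat.factorial]
  rw [hc] at h
  have h2 : |x| ^ 2 = x ^ 2 := sq_abs x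
  have := abs_le.mp h
  nlinarith [sq_nonneg x]

/-- For an adapted real process with `X₀ = 0`, increments bounded by `1` in
absolute value and conditional drift at most `−δ` (`0 < δ ≤ 1`), the probability that the
process exits the interval `(y, z)` (with `y < 0`, `z ≥ 4`) at the top, i.e. that
`X_T ≥ z` at the first exit time `T`, is at most `exp(−δ²z/4)/(1 − exp(−δ³/4))`. -/
theorem biased_walk_top_exit_bound {Ω : Type*} {mΩ : MeasurableSpace Ω} (μ : Measure Ω)
    [IsProbabilityMeasure μ] (F : Filtration ℕ mΩ) (X : ℕ → Ω → ℝ)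
    (hmeas : ∀ t, Measurable (X t)) (hadapt : ∀ t, Measurable[F t] (X t))
    (hX0 : ∀ ω, X 0 ω = 0) (δ : ℝ) (hδ0 : 0 < δ) (hδ1 : δ ≤ 1)
    (hinc : ∀ t, ∀ᵐ ω ∂μ, |X (t + 1) ω - X t ω| ≤ 1)
    (hdrift : ∀ t, ∀ᵐ ω ∂μ, (μ[fun ω' => X (t + 1) ω' - X t ω'|F t]) ω ≤ -δ)
    (y z : ℝ) (hy : y < 0) (hz : 4 ≤ z) :
    μ {ω | ∃ t, (∀ u < t, y < X u ω ∧ X u ω < z) ∧ z ≤ X t ω} ≤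
      ENNReal.ofReal (Real.exp (-(δ ^ 2 * z / 4)) / (1 - Real.exp (-(δ ^ 3 / 4)))) := by
  classical
  set l : ℝ := δ / 2 with hl
  have hl0 : 0 < l := by positivity
  have hl1 : l ≤ 1 := by rw [hl]; linarith
  set r : ℝ := 1 - δ ^ 2 / 4 with hr
  have hr0 : 0 ≤ r := by rw [hr]; nlinarith
  have hr1 : r < 1 := by rw [hr]; nlinarith
  -- a.s. bound |X t| ≤ t
  have hXb : ∀ᵐ ω ∂μ, ∀ t, |X t ω| ≤ t := by
    rw [ae_all_iff]
    intro t
    induction t with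
    | zero => filter_upwards with ω; simp [hX0]
    | succ n ih =>
      filter_upwards [ih, hinc n] with ω h1 h2
      calc |X (n+1) ω| = |X n ω + (X (n+1) ω - X n ω)| := by ring_nf
        _ ≤ |X n ω| + |X (n+1) ω - X n ω| := abs_add_le _ _
        _ ≤ (n : ℝ) + 1 := by linarith
        _ = ((n + 1 : ℕ) : ℝ) := by push_cast; ring

  -- integrability of exp(l * X t)
  have hfmeas : ∀ t, Measurable fun ω => Real.exp (l * X t ω) :=
    fun t => Real.measurable_exp.comp ((hmeas t).const_mul l)
  have hfint : ∀ t, Integrable (fun ω => Real.exp (l * X t ω)) μ := by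
    intro t
    refine Integrable.mono' (integrable_const (Real.exp (l * t)))
      (hfmeas t).aestronglyMeasurable ?_
    filter_upwards [hXb] with ω hω
    rw [Real.norm_eq_abs, abs_of_pos (Real.exp_pos _), Real.exp_le_exp]
    have := (abs_le.mp (hω t)).2
    nlinarith
  have hfnonneg : ∀ t, 0 ≤ ∫ ω, Real.exp (l * X t ω) ∂μ :=
    fun t => integral_nonneg fun ω => (Real.exp_pos _).le
  -- key supermartingale estimate
  have key : ∀ t, ∫ ω, Real.exp (l * X t ω) ∂μ ≤ r ^ t := by
    intro t
    induction t with
    | zero => simp [hX0]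
    | succ n ih =>
      set f : Ω → ℝ := fun ω => Real.exp (l * X n ω) with hf
      set D : Ω → ℝ := fun ω => X (n + 1) ω - X n ω with hD
      have hDmeas : Measurable D := (hmeas (n+1)).sub (hmeas n)
      have hDint : Integrable D μ := by
        refine Integrable.mono' (integrable_const 1) hDmeas.aestronglyMeasurable ?_
        filter_upwards [hinc n] with ω hω using hω
      have hfDint : Integrable (f * D) μ := by
        refine Integrable.mono' (integrable_const (Real.exp (l * n)))
          ((hfmeas n).mul hDmeas).aestronglyMeasurable ?_
        filter_upwards [hXb, hinc n] with ω h1 h2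
        rw [Pi.mul_apply, norm_mul, Real.norm_eq_abs, Real.norm_eq_abs,
          abs_of_pos (Real.exp_pos _)]
        calc Real.exp (l * X n ω) * |D ω| ≤ Real.exp (l * n) * 1 := by
              refine mul_le_mul ?_ h2 (abs_nonneg _) (Real.exp_pos _).le
              rw [Real.exp_le_exp]
              have := (abs_le.mp (h1 n)).2
              nlinarith
          _ = Real.exp (l * n) := mul_one _
      have hfsm : StronglyMeasurable[F n] f :=
        (Real.measurable_exp.comp ((hadapt n).const_mul l)).stronglyMeasurable
      haveI : SigmaFinite (μ.trim (F.le n)) := inferInstance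
      have hcond : μ[f * D|F n] =ᵐ[μ] f * μ[D|F n] :=
        condExp_mul_of_stronglyMeasurable_left hfsm hfDint hDint
      have hcondint : Integrable (f * μ[D|F n]) μ := by
        refine Integrable.mono' (((integrable_condExp : Integrable (μ[D|F n]) μ).abs).const_mul (Real.exp (l * n)))
          (((hfsm.mono (F.le n)).mul (stronglyMeasurable_condExp.mono (F.le n))).aestronglyMeasurable) ?_
        filter_upwards [hXb] with ω hω
        rw [Pi.mul_apply, norm_mul, Real.norm_eq_abs, Real.norm_eq_abs,
          abs_of_pos (Real.exp_pos _)]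
        refine mul_le_mul_of_nonneg_right ?_ (abs_nonneg _)
        rw [Real.exp_le_exp]
        have := (abs_le.mp (hω n)).2
        nlinarith
      -- step 1: ∫ f * D ≤ -δ * ∫ f
      have step1 : ∫ ω, f ω * D ω ∂μ ≤ -δ * ∫ ω, f ω ∂μ := by
        have e1 : ∫ ω, f ω * D ω ∂μ = ∫ ω, (μ[f * D|F n]) ω ∂μ :=
          (integral_condExp (F.le n)).symm
        have e2 : ∫ ω, (μ[f * D|F n]) ω ∂μ = ∫ ω, f ω * (μ[D|F n]) ω ∂μ :=
          integral_congr_ae hcond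
        rw [e1, e2]
        have e3 : ∫ ω, -δ * f ω ∂μ = -δ * ∫ ω, f ω ∂μ := integral_const_mul _ _
        rw [← e3]
        refine integral_mono_ae hcondint ((hfint n).const_mul (-δ)) ?_
        filter_upwards [hdrift n] with ω hω
        have : f ω * (μ[D|F n]) ω ≤ f ω * (-δ) :=
          mul_le_mul_of_nonneg_left hω (Real.exp_pos _).le
        simpa [mul_comm] using this
      -- step 2: pointwise bound
      have step2 : ∀ᵐ ω ∂μ, Real.exp (l * X (n+1) ω) ≤
          (1 + l ^ 2) * f ω + l * (f ω * D ω) := by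
        filter_upwards [hinc n] with ω hω
        have hXsplit : l * X (n+1) ω = l * X n ω + l * D ω := by rw [hD]; ring
        rw [hXsplit, Real.exp_add]
        have hld : |l * D ω| ≤ 1 := by
          rw [abs_mul, abs_of_pos hl0]
          calc l * |D ω| ≤ 1 * 1 := mul_le_mul hl1 hω (abs_nonneg _) zero_le_one
            _ = 1 := one_mul 1
        have hquad := exp_le_one_add_add_sq hld
        have hsq : (l * D ω) ^ 2 ≤ l ^ 2 := by
          have : (l * D ω)^2 = l^2 * D ω ^2 := by ring
          rw [this]
          have hd2 : D ω ^ 2 ≤ 1 := by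
            rw [← sq_abs]; nlinarith [abs_nonneg (D ω)]
          nlinarith
        have h1 : Real.exp (l * D ω) ≤ 1 + l ^ 2 + l * D ω := by nlinarith
        calc Real.exp (l * X n ω) * Real.exp (l * D ω)
            ≤ Real.exp (l * X n ω) * (1 + l ^ 2 + l * D ω) :=
              mul_le_mul_of_nonneg_left h1 (Real.exp_pos _).le
          _ = (1 + l ^ 2) * f ω + l * (f ω * D ω) := by rw [hf]; ring
      have hrhsint : Integrable (fun ω => (1 + l ^ 2) * f ω + l * (f ω * D ω)) μ :=
        ((hfint n).const_mul _).add (hfDint.const_mul l)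
      calc ∫ ω, Real.exp (l * X (n+1) ω) ∂μ
          ≤ ∫ ω, ((1 + l ^ 2) * f ω + l * (f ω * D ω)) ∂μ :=
            integral_mono_ae (hfint (n+1)) hrhsint step2
        _ = (1 + l ^ 2) * ∫ ω, f ω ∂μ + l * ∫ ω, f ω * D ω ∂μ := by
            have h1 : Integrable (fun ω => (1 + l ^ 2) * f ω) μ := (hfint n).const_mul _
            have h2 : Integrable (fun ω => l * (f ω * D ω)) μ := by
              exact (hfDint.const_mul l : Integrable (fun ω => l * (f * D) ω) μ)
            rw [integral_add h1 h2, integral_const_mul, integral_const_mul]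
        _ ≤ (1 + l ^ 2) * ∫ ω, f ω ∂μ + l * (-δ * ∫ ω, f ω ∂μ) := by
            have := mul_le_mul_of_nonneg_left step1 hl0.le
            linarith
        _ = (1 + l ^ 2 - l * δ) * ∫ ω, f ω ∂μ := by ring
        _ = r * ∫ ω, f ω ∂μ := by rw [hr, hl]; ring_nf
        _ ≤ r * r ^ n := mul_le_mul_of_nonneg_left ih hr0
        _ = r ^ (n + 1) := (pow_succ' r n).symm
    -- Markov bound for each time t
  have markov : ∀ t : ℕ, μ {ω | z ≤ X t ω} ≤ ENNReal.ofReal (Real.exp (-(l * z)) * r ^ t) := by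
    intro t
    have hsubset : {ω | z ≤ X t ω} ⊆ {ω | Real.exp (l * z) ≤ Real.exp (l * X t ω)} := by
      intro ω hω
      simp only [Set.mem_setOf_eq] at hω ⊢
      exact Real.exp_le_exp.2 (mul_le_mul_of_nonneg_left hω hl0.le)
    have hm := mul_meas_ge_le_integral_of_nonneg
      (ae_of_all μ fun ω => (Real.exp_pos (l * X t ω)).le) (hfint t) (Real.exp (l * z))
    have h2 : Real.exp (l * z) *
        (μ {ω | Real.exp (l * z) ≤ Real.exp (l * X t ω)}).toReal ≤ r ^ t :=
      le_trans hm (key t)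
    have hle : (μ {ω | Real.exp (l * z) ≤ Real.exp (l * X t ω)}).toReal ≤
        Real.exp (-(l * z)) * r ^ t := by
      have hepos : (0:ℝ) < Real.exp (l * z) := Real.exp_pos _
      rw [Real.exp_neg]
      calc (μ {ω | Real.exp (l * z) ≤ Real.exp (l * X t ω)}).toReal
          = (Real.exp (l * z))⁻¹ * (Real.exp (l * z) *
              (μ {ω | Real.exp (l * z) ≤ Real.exp (l * X t ω)}).toReal) := by
            field_simp
        _ ≤ (Real.exp (l * z))⁻¹ * r ^ t :=
            mul_le_mul_of_nonneg_left h2 (inv_nonneg.2 hepos.le)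
    calc μ {ω | z ≤ X t ω} ≤ μ {ω | Real.exp (l * z) ≤ Real.exp (l * X t ω)} :=
          measure_mono hsubset
      _ = ENNReal.ofReal ((μ {ω | Real.exp (l * z) ≤ Real.exp (l * X t ω)}).toReal) :=
          (ENNReal.ofReal_toReal (measure_ne_top μ _)).symm
      _ ≤ ENNReal.ofReal (Real.exp (-(l * z)) * r ^ t) := ENNReal.ofReal_le_ofReal hle
  have hUnion : {ω | ∃ t, (∀ u < t, y < X u ω ∧ X u ω < z) ∧ z ≤ X t ω} ⊆
      ⋃ t, {ω | z ≤ X t ω} := by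
    rintro ω ⟨t, -, h⟩
    exact Set.mem_iUnion.2 ⟨t, h⟩
  have hsummable : Summable (fun t : ℕ => Real.exp (-(l * z)) * r ^ t) :=
    (summable_geometric_of_lt_one hr0 hr1).mul_left _
  have htsum : (∑' t : ℕ, Real.exp (-(l * z)) * r ^ t) = Real.exp (-(l * z)) * (1 - r)⁻¹ := by
    rw [tsum_mul_left, tsum_geometric_of_lt_one hr0 hr1]
  have hA0 : (0:ℝ) < 1 - Real.exp (-(δ ^ 3 / 4)) := by
    have : Real.exp (-(δ ^ 3 / 4)) < 1 := by
      rw [← Real.exp_zero]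
      exact Real.exp_lt_exp.2 (by nlinarith [pow_pos hδ0 3])
    linarith
  have hA : 1 - Real.exp (-(δ ^ 3 / 4)) ≤ δ ^ 2 / 4 := by
    have h := Real.add_one_le_exp (-(δ ^ 3 / 4))
    nlinarith
  have hnum : Real.exp (-(l * z)) ≤ Real.exp (-(δ ^ 2 * z / 4)) := by
    rw [Real.exp_le_exp, hl]
    nlinarith [mul_nonneg (mul_nonneg hδ0.le (by linarith : (0:ℝ) ≤ z))
      (by linarith : (0:ℝ) ≤ 2 - δ)]
  have hfinal : Real.exp (-(l * z)) * (1 - r)⁻¹ ≤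
      Real.exp (-(δ ^ 2 * z / 4)) / (1 - Real.exp (-(δ ^ 3 / 4))) := by
    have h1r : 1 - r = δ ^ 2 / 4 := by rw [hr]; ring
    rw [h1r, ← div_eq_mul_inv]
    exact div_le_div₀ (Real.exp_pos _).le hnum hA0 hA
  calc μ {ω | ∃ t, (∀ u < t, y < X u ω ∧ X u ω < z) ∧ z ≤ X t ω}
      ≤ μ (⋃ t, {ω | z ≤ X t ω}) := measure_mono hUnion
    _ ≤ ∑' t, μ {ω | z ≤ X t ω} := measure_iUnion_le _
    _ ≤ ∑' t : ℕ, ENNReal.ofReal (Real.exp (-(l * z)) * r ^ t) := ENNReal.tsum_le_tsum markov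
    _ = ENNReal.ofReal (∑' t : ℕ, Real.exp (-(l * z)) * r ^ t) :=
        (ENNReal.ofReal_tsum_of_nonneg (fun t => by positivity) hsummable).symm
    _ ≤ ENNReal.ofReal (Real.exp (-(δ ^ 2 * z / 4)) / (1 - Real.exp (-(δ ^ 3 / 4)))) := by
        refine ENNReal.ofReal_le_ofReal ?_
        rw [htsum]
        exact hfinal
end

section
/- Fix φ > 0, α > 0, and σ > 0, and let g(β) = √(φ² − 2φα·cos(β) + α²) (the distance to the origin after a step of length α at angle β from distance φ). Let β_RW be uniformly distributed on [−π, π] and let β_PA have the distribution of a normal N(0, σ²) random variable truncated (conditioned) to [−π, π]. Then g(β_RW) stochastically dominates g(β_PA): for every real x, P(g(β_RW) ≥ x) ≥ P(g(β_PA) ≥ x). -/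
open MeasureTheory ProbabilityTheory Real
open scoped ENNReal

noncomputable section

/-- The uniform distribution on `[−π, π]` (the angle law of the unbiased random walk). -/
def uniformAngle : Measure ℝ :=
  ENNReal.ofReal (1 / (2 * Real.pi)) • volume.restrict (Set.Icc (-Real.pi) Real.pi)

/-- The normal distribution `N(0, v)` (variance `v`) truncated (conditioned) to `[−π, π]`:
its density is proportional to `exp(−u²/(2v))` on `[−π, π]` and zero outside. -/
def truncNormalVar (v : ℝ) : Measure ℝ :=
  (volume.restrict (Set.Icc (-Real.pi) Real.pi)).withDensity fun u =>
    ENNReal.ofReal (Real.exp (-(u ^ 2) / (2 * v)) /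
      ∫ w in Set.Icc (-Real.pi) Real.pi, Real.exp (-(w ^ 2) / (2 * v)))

/-! The distance `g(β)` depends only on `|β|` and increases with it on `[0, π]`, so every
event `{x ≤ g(β)}` is, up to a null set, a symmetric tail `{t ≤ |β|}` with `t ∈ [0, π]`.
The truncated normal density is even and nonincreasing in `|β|`, so it gives the tail `[t, π]`
at most the share `(π - t) / π` of the mass of `[0, π]`, which is exactly the uniform tail. -/

open Set

theorem AntitoneOn.intervalIntegral_tail_mul_le {f : ℝ → ℝ} {a b c : ℝ}
    (hf : AntitoneOn f (Icc a c)) (hab : a ≤ b) (hbc : b ≤ c) :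
    (c - a) * ∫ x in b..c, f x ≤ (c - b) * ∫ x in a..c, f x := by
  have hint : ∀ {p q}, a ≤ p → p ≤ q → q ≤ c → IntervalIntegrable f volume p q :=
    fun hp hpq hq =>
      (hf.mono (by rw [uIcc_of_le hpq]; exact Icc_subset_Icc hp hq)).intervalIntegrable
  have htail : ∫ x in b..c, f x ≤ (c - b) * f b := by
    simpa using intervalIntegral.integral_mono_on hbc (hint hab hbc le_rfl)
      intervalIntegrable_const fun x hx =>
        hf ⟨hab, hbc⟩ ⟨hab.trans hx.1, hx.2⟩ hx.1
  have hhead : (b - a) * f b ≤ ∫ x in a..b, f x := by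
    simpa using intervalIntegral.integral_mono_on hab intervalIntegrable_const
      (hint le_rfl hab hbc) fun x hx => hf ⟨hx.1, hx.2.trans hbc⟩ ⟨hab, hbc⟩ hx.2
  rw [← intervalIntegral.integral_add_adjacent_intervals (hint le_rfl hab hbc)
    (hint hab hbc le_rfl)]
  nlinarith [mul_le_mul_of_nonneg_left htail (sub_nonneg.2 hab),
    mul_le_mul_of_nonneg_left hhead (sub_nonneg.2 hbc)]

theorem abs_ge_inter_Icc_eq_union {t : ℝ} (ht : 0 ≤ t) (a : ℝ) :
    {β : ℝ | t ≤ |β|} ∩ Icc (-a) a = Icc (-a) (-t) ∪ Icc t a := by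
  ext β
  simp only [mem_inter_iff, mem_ofPred_eq, mem_Icc, mem_union, le_abs']
  constructor
  · rintro ⟨hβ | hβ, h₁, h₂⟩
    · exact Or.inl ⟨h₁, by linarith⟩
    · exact Or.inr ⟨hβ, h₂⟩
  · rintro (⟨h₁, h₂⟩ | ⟨h₁, h₂⟩)
    · exact ⟨Or.inl (by linarith), h₁, by linarith⟩
    · exact ⟨Or.inr h₁, by linarith, h₂⟩

theorem integral_abs_ge_inter_Icc_of_even {ρ : ℝ → ℝ} {t a : ℝ} (ht : 0 ≤ t) (hta : t ≤ a)
    (hρ : IntegrableOn ρ (Icc (-a) a)) (heven : ∀ u, ρ (-u) = ρ u) :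
    ∫ u in {β : ℝ | t ≤ |β|} ∩ Icc (-a) a, ρ u = 2 * ∫ u in t..a, ρ u := by
  have hnull : AEDisjoint volume (Icc (-a) (-t)) (Icc t a) := by
    refine measure_mono_null (t := Icc t (-t)) (fun β hβ => ⟨hβ.2.1, hβ.1.2⟩) ?_
    rw [Real.volume_Icc, ENNReal.ofReal_eq_zero]
    linarith
  have hneg : ∫ u in Icc (-a) (-t), ρ u = ∫ u in t..a, ρ u := by
    rw [integral_Icc_eq_integral_Ioc, ← intervalIntegral.integral_of_le (by linarith),
      ← intervalIntegral.integral_comp_neg]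
    simp only [heven]
  rw [abs_ge_inter_Icc_eq_union ht, setIntegral_union₀ hnull nullMeasurableSet_Icc
      (hρ.mono_set (Icc_subset_Icc le_rfl (by linarith)))
      (hρ.mono_set (Icc_subset_Icc (by linarith) le_rfl)), hneg,
    integral_Icc_eq_integral_Ioc, ← intervalIntegral.integral_of_le hta]
  ring

theorem withDensity_abs_ge_of_even {ρ : ℝ → ℝ} {t a : ℝ} (ht : 0 ≤ t) (hta : t ≤ a)
    (hρ : IntegrableOn ρ (Icc (-a) a)) (hρ_nonneg : ∀ u, 0 ≤ ρ u)
    (heven : ∀ u, ρ (-u) = ρ u) :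
    (volume.restrict (Icc (-a) a)).withDensity (fun u => ENNReal.ofReal (ρ u))
        {β | t ≤ |β|} = ENNReal.ofReal (2 * ∫ u in t..a, ρ u) := by
  rw [withDensity_apply', Measure.restrict_restrict' measurableSet_Icc,
    ← integral_abs_ge_inter_Icc_of_even ht hta hρ heven,
    ofReal_integral_eq_lintegral_ofReal (hρ.mono_set inter_subset_right)
      (Filter.Eventually.of_forall hρ_nonneg)]

theorem antitoneOn_exp_neg_sq_div {v : ℝ} (hv : 0 ≤ v) :
    AntitoneOn (fun u : ℝ => exp (-(u ^ 2) / (2 * v))) (Ici 0) := by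
  intro x hx y _ hxy
  simp only
  gcongr

theorem uniformAngle_eq_withDensity :
    uniformAngle = (volume.restrict (Icc (-π) π)).withDensity
      fun _ => ENNReal.ofReal (1 / (2 * π)) := by
  rw [uniformAngle, withDensity_const]

theorem uniformAngle_absolutelyContinuous : uniformAngle ≪ volume.restrict (Icc (-π) π) :=
  uniformAngle_eq_withDensity ▸ withDensity_absolutelyContinuous _ _

theorem truncNormalVar_absolutelyContinuous (v : ℝ) :
    truncNormalVar v ≪ volume.restrict (Icc (-π) π) :=
  withDensity_absolutelyContinuous _ _

theorem truncNormalVar_abs_ge_le_uniformAngle {v t : ℝ} (hv : 0 ≤ v) (ht : 0 ≤ t)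
    (htπ : t ≤ π) : truncNormalVar v {β | t ≤ |β|} ≤ uniformAngle {β | t ≤ |β|} := by
  set f : ℝ → ℝ := fun u => exp (-(u ^ 2) / (2 * v))
  have hf_cont : Continuous f := by fun_prop
  have hf_even : ∀ u, f (-u) = f u := fun u => by simp only [f, neg_sq]
  have hZ : ∫ w in Icc (-π) π, f w = 2 * ∫ w in 0..π, f w := by
    simpa using integral_abs_ge_inter_Icc_of_even le_rfl pi_pos.le
      hf_cont.integrableOn_Icc hf_even
  have hI : 0 < ∫ w in 0..π, f w :=
    intervalIntegral.intervalIntegral_pos_of_pos_on (hf_cont.intervalIntegrable _ _)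
      (fun u _ => exp_pos _) pi_pos
  have hunif : uniformAngle {β | t ≤ |β|} = ENNReal.ofReal ((π - t) / π) := by
    rw [uniformAngle_eq_withDensity, withDensity_abs_ge_of_even ht htπ
      (continuous_const.integrableOn_Icc) (fun _ => by positivity) (fun _ => rfl)]
    congr 1
    simp only [intervalIntegral.integral_const, smul_eq_mul]
    field_simp
  have htrunc : truncNormalVar v {β | t ≤ |β|} =
      ENNReal.ofReal ((∫ u in t..π, f u) / ∫ u in 0..π, f u) := by
    rw [truncNormalVar, withDensity_abs_ge_of_even ht htπ
      ((hf_cont.div_const _).integrableOn_Icc) (fun _ => by positivity)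
      (fun u => by simp only [hf_even]), intervalIntegral.integral_div, hZ]
    congr 1
    field_simp
  rw [hunif, htrunc]
  refine ENNReal.ofReal_le_ofReal ((div_le_div_iff₀ hI pi_pos).2 ?_)
  have hf_anti : AntitoneOn f (Icc 0 π) :=
    (antitoneOn_exp_neg_sq_div hv).mono Icc_subset_Ici_self
  linarith [hf_anti.intervalIntegral_tail_mul_le ht htπ]

theorem Real.cos_le_iff_arccos_le_abs {β c : ℝ} (hβ : |β| < π) :
    cos β ≤ c ↔ arccos c ≤ |β| := by
  rw [← cos_abs]
  have hβ₀ := abs_nonneg β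
  rcases lt_or_ge c (-1) with hc | hc
  · have : -1 < cos |β| := by simpa using cos_lt_cos_of_nonneg_of_le_pi hβ₀ le_rfl hβ
    rw [arccos_eq_pi.2 hc.le]
    exact iff_of_false (by linarith) hβ.not_ge
  rcases le_or_gt c 1 with hc₁ | hc₁
  · nth_rw 1 [← cos_arccos hc hc₁]
    exact strictAntiOn_cos.le_iff_ge ⟨hβ₀, hβ.le⟩ ⟨arccos_nonneg c, arccos_le_pi c⟩
  · rw [arccos_eq_zero.2 hc₁.le]
    exact iff_of_true ((cos_le_one _).trans hc₁.le) hβ₀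

theorem le_sqrt_iff_cos_le {φ α x β : ℝ} (hφα : 0 < φ * α) (hx : 0 < x) :
    x ≤ √(φ ^ 2 - 2 * φ * α * cos β + α ^ 2) ↔
      cos β ≤ (φ ^ 2 + α ^ 2 - x ^ 2) / (2 * φ * α) := by
  rw [le_sqrt' hx, le_div_iff₀ (by linarith)]
  constructor <;> intro h <;> linarith

theorem exists_superlevel_ae_eq_abs_ge {φ α : ℝ} (hφα : 0 < φ * α) (x : ℝ) :
    ∃ t ∈ Icc 0 π, {β | x ≤ √(φ ^ 2 - 2 * φ * α * cos β + α ^ 2)}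
      =ᵐ[volume.restrict (Icc (-π) π)] {β | t ≤ |β|} := by
  rcases le_or_gt x 0 with hx | hx
  · refine ⟨0, ⟨le_rfl, pi_pos.le⟩, Filter.eventuallyEq_set.2 (Filter.Eventually.of_forall ?_)⟩
    exact fun β => iff_of_true (hx.trans (sqrt_nonneg _)) (abs_nonneg β)
  refine ⟨arccos ((φ ^ 2 + α ^ 2 - x ^ 2) / (2 * φ * α)), ⟨arccos_nonneg _, arccos_le_pi _⟩,
    Filter.eventuallyEq_set.2 ?_⟩
  -- Off the null set `{-π, π}`; there the event may be empty while `{π ≤ |β|}` is not.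
  have hinterior : ∀ᵐ β ∂volume.restrict (Icc (-π) π), β ∈ Ioo (-π) π := by
    rw [Measure.restrict_congr_set Ioo_ae_eq_Icc.symm]
    exact ae_restrict_mem measurableSet_Ioo
  filter_upwards [hinterior] with β hβ
  exact (le_sqrt_iff_cos_le hφα hx).trans (cos_le_iff_arccos_le_abs (abs_lt.2 hβ))

theorem rw_distance_dominates_truncnormal_general (φ α σ : ℝ) (hφ : 0 < φ) (hα : 0 < α) :
    ∀ x : ℝ,
      truncNormalVar (σ ^ 2) {β | x ≤ Real.sqrt (φ ^ 2 - 2 * φ * α * Real.cos β + α ^ 2)} ≤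
        uniformAngle {β | x ≤ Real.sqrt (φ ^ 2 - 2 * φ * α * Real.cos β + α ^ 2)} := by
  intro x
  obtain ⟨t, ⟨ht₀, htπ⟩, hS⟩ := exists_superlevel_ae_eq_abs_ge (mul_pos hφ hα) x
  rw [measure_congr ((truncNormalVar_absolutelyContinuous _).ae_eq hS),
    measure_congr (uniformAngle_absolutelyContinuous.ae_eq hS)]
  exact truncNormalVar_abs_ge_le_uniformAngle (sq_nonneg σ) ht₀ htπ

/-- The post-step distance `g(β) = √(φ² − 2φα cos β + α²)` under a uniform
angle stochastically dominates the same quantity under a truncated normal `N(0, σ²)` angle: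
`P(g(β_RW) ≥ x) ≥ P(g(β_PA) ≥ x)` for every `x`. -/
theorem rw_distance_dominates_truncnormal (φ α σ : ℝ) (hφ : 0 < φ) (hα : 0 < α)
    (hσ : 0 < σ) :
    ∀ x : ℝ,
      truncNormalVar (σ ^ 2) {β | x ≤ Real.sqrt (φ ^ 2 - 2 * φ * α * Real.cos β + α ^ 2)} ≤
        uniformAngle {β | x ≤ Real.sqrt (φ ^ 2 - 2 * φ * α * Real.cos β + α ^ 2)} :=
  rw_distance_dominates_truncnormal_general φ α σ hφ hα

end
end

section
/- Let X and Y be independent real Gaussian random variables with X ~ N(m, s²) and Y ~ N(0, s²), where s > 0, ρ > 0 and m ≥ ρ/√2. Then P(X² + Y² ≤ ρ²) ≥ (ρ²/(π s²))·exp(−(ρ² + ρ·m·√2 + m²)/(2s²)). -/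
/-!
With `a = ρ/√2`, the square `[-a, a]²` lies in the disk of radius `ρ`, so by independence the
probability is at least `P(X ∈ [-a, a]) · P(Y ∈ [-a, a])`. Since `m ≥ 0`, the point of `[-a, a]`
farthest from either mean is `-a`, and each factor is at least `2a` times the density there.
-/

open MeasureTheory ProbabilityTheory Set
open scoped ENNReal NNReal

namespace ProbabilityTheory

lemma gaussianPDFReal_le_of_abs_sub_le {m x y : ℝ} (v : ℝ≥0) (h : |x - m| ≤ |y - m|) :
    gaussianPDFReal m v y ≤ gaussianPDFReal m v x := by
  rw [gaussianPDFReal, gaussianPDFReal]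
  gcongr _ * Real.exp (-?_ / _)
  exact sq_le_sq.mpr h

lemma gaussianPDFReal_mul_gaussianPDFReal (m m' : ℝ) (v : ℝ≥0) (x y : ℝ) :
    gaussianPDFReal m v x * gaussianPDFReal m' v y =
      (2 * Real.pi * v)⁻¹ * Real.exp (-((x - m) ^ 2 + (y - m') ^ 2) / (2 * v)) := by
  rw [gaussianPDFReal, gaussianPDFReal, neg_add, add_div, Real.exp_add, mul_mul_mul_comm,
    ← mul_inv, Real.mul_self_sqrt (by positivity)]

lemma two_mul_gaussianPDFReal_neg_div_sqrt_two_mul (ρ m : ℝ) (v : ℝ≥0) :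
    2 * (ρ / √2) * gaussianPDFReal m v (-(ρ / √2)) *
        (2 * (ρ / √2) * gaussianPDFReal 0 v (-(ρ / √2))) =
      ρ ^ 2 / (Real.pi * v) * Real.exp (-(ρ ^ 2 + ρ * m * √2 + m ^ 2) / (2 * v)) := by
  have hsq : (ρ / √2) ^ 2 = ρ ^ 2 / 2 := by rw [div_pow, Real.sq_sqrt zero_le_two]
  have hmul : 2 * (ρ / √2) * m = ρ * m * √2 := by
    field_simp
    rw [Real.sq_sqrt zero_le_two]
    ring
  have hexp : (-(ρ / √2) - m) ^ 2 + (-(ρ / √2) - 0) ^ 2 = ρ ^ 2 + ρ * m * √2 + m ^ 2 := by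
    linear_combination 2 * hsq + hmul
  have hcoef : 2 * (ρ / √2) * (2 * (ρ / √2)) = 2 * ρ ^ 2 := by linear_combination 4 * hsq
  rw [mul_mul_mul_comm, gaussianPDFReal_mul_gaussianPDFReal, hexp, hcoef]
  field_simp

lemma ofReal_mul_gaussianPDFReal_le_gaussianReal_Icc {m l u e : ℝ} {v : ℝ≥0} (hv : v ≠ 0)
    (he : ∀ x ∈ Icc l u, |x - m| ≤ |e - m|) :
    ENNReal.ofReal ((u - l) * gaussianPDFReal m v e) ≤ gaussianReal m v (Icc l u) := by
  rw [gaussianReal_apply m hv, ENNReal.ofReal_mul' (gaussianPDFReal_nonneg m v e),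
    ← Real.volume_Icc, mul_comm, ← setLIntegral_const]
  refine setLIntegral_mono (measurable_gaussianPDF m v) fun x hx ↦ ?_
  exact ENNReal.ofReal_le_ofReal (gaussianPDFReal_le_of_abs_sub_le v (he x hx))

lemma ofReal_mul_gaussianPDFReal_neg_le_gaussianReal_Icc {m a : ℝ} {v : ℝ≥0} (hv : v ≠ 0)
    (ha : 0 ≤ a) (hm : 0 ≤ m) :
    ENNReal.ofReal (2 * a * gaussianPDFReal m v (-a)) ≤ gaussianReal m v (Icc (-a) a) := by
  convert ofReal_mul_gaussianPDFReal_le_gaussianReal_Icc hv fun x hx ↦ ?_ using 3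
  · ring
  rw [show -a - m = -(a + m) by ring, abs_neg, abs_of_nonneg (by linarith : 0 ≤ a + m), abs_le]
  constructor <;> linarith [hx.1, hx.2]

lemma sq_add_sq_le_sq_of_mem_Icc {ρ x y : ℝ} (hx : x ∈ Icc (-(ρ / √2)) (ρ / √2))
    (hy : y ∈ Icc (-(ρ / √2)) (ρ / √2)) : x ^ 2 + y ^ 2 ≤ ρ ^ 2 := by
  have hx2 := sq_le_sq' hx.1 hx.2
  have hy2 := sq_le_sq' hy.1 hy.2
  rw [div_pow, Real.sq_sqrt zero_le_two] at hx2 hy2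
  linarith

lemma IndepFun.measure_preimage_inter_eq_map_mul {Ω β β' : Type*} [MeasurableSpace Ω]
    [MeasurableSpace β] [MeasurableSpace β'] {μ : Measure Ω} {X : Ω → β} {Y : Ω → β'}
    (hX : Measurable X) (hY : Measurable Y) (hindep : IndepFun X Y μ) {A : Set β} {B : Set β'}
    (hA : MeasurableSet A) (hB : MeasurableSet B) :
    μ (X ⁻¹' A ∩ Y ⁻¹' B) = μ.map X A * μ.map Y B := by
  rw [hindep.measure_inter_preimage_eq_mul _ _ hA hB, Measure.map_apply hX hA,
    Measure.map_apply hY hB]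

end ProbabilityTheory

theorem gaussian_disk_hit_lower_bound_general {Ω : Type*} [MeasurableSpace Ω] (μ : Measure Ω)
    (X Y : Ω → ℝ) (hX : Measurable X) (hY : Measurable Y)
    (hindep : IndepFun X Y μ) (m ρ : ℝ) (s : ℝ≥0) (hs : 0 < s) (hρ : 0 < ρ)
    (hm : ρ / Real.sqrt 2 ≤ m)
    (hXlaw : μ.map X = gaussianReal m (s ^ 2))
    (hYlaw : μ.map Y = gaussianReal 0 (s ^ 2)) :
    ENNReal.ofReal (ρ ^ 2 / (Real.pi * (s : ℝ) ^ 2) *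
        Real.exp (-(ρ ^ 2 + ρ * m * Real.sqrt 2 + m ^ 2) / (2 * (s : ℝ) ^ 2))) ≤
      μ {ω | X ω ^ 2 + Y ω ^ 2 ≤ ρ ^ 2} := by
  set a := ρ / √2
  have ha : 0 ≤ a := by positivity
  have hv : s ^ 2 ≠ 0 := pow_ne_zero 2 hs.ne'
  calc ENNReal.ofReal (ρ ^ 2 / (Real.pi * (s : ℝ) ^ 2) *
        Real.exp (-(ρ ^ 2 + ρ * m * Real.sqrt 2 + m ^ 2) / (2 * (s : ℝ) ^ 2)))
      = ENNReal.ofReal (2 * a * gaussianPDFReal m (s ^ 2) (-a)) *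
          ENNReal.ofReal (2 * a * gaussianPDFReal 0 (s ^ 2) (-a)) := by
        rw [← ENNReal.ofReal_mul (mul_nonneg (by positivity) (gaussianPDFReal_nonneg _ _ _)),
          two_mul_gaussianPDFReal_neg_div_sqrt_two_mul, NNReal.coe_pow]
    _ ≤ gaussianReal m (s ^ 2) (Icc (-a) a) * gaussianReal 0 (s ^ 2) (Icc (-a) a) := by
        gcongr
        · exact ofReal_mul_gaussianPDFReal_neg_le_gaussianReal_Icc hv ha (ha.trans hm)
        · exact ofReal_mul_gaussianPDFReal_neg_le_gaussianReal_Icc hv ha le_rfl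
    _ = μ (X ⁻¹' Icc (-a) a ∩ Y ⁻¹' Icc (-a) a) := by
        rw [hindep.measure_preimage_inter_eq_map_mul hX hY measurableSet_Icc measurableSet_Icc,
          hXlaw, hYlaw]
    _ ≤ μ {ω | X ω ^ 2 + Y ω ^ 2 ≤ ρ ^ 2} :=
        measure_mono fun _ ⟨hx, hy⟩ ↦ by exact sq_add_sq_le_sq_of_mem_Icc hx hy

/-- If `X ~ N(m, s²)` and `Y ~ N(0, s²)` are independent Gaussians with
`s > 0`, `ρ > 0` and `m ≥ ρ/√2`, then
`P(X² + Y² ≤ ρ²) ≥ (ρ²/(π s²))·exp(−(ρ² + ρm√2 + m²)/(2s²))`. -/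
theorem gaussian_disk_hit_lower_bound {Ω : Type*} [MeasurableSpace Ω] (μ : Measure Ω)
    [IsProbabilityMeasure μ] (X Y : Ω → ℝ) (hX : Measurable X) (hY : Measurable Y)
    (hindep : IndepFun X Y μ) (m ρ : ℝ) (s : ℝ≥0) (hs : 0 < s) (hρ : 0 < ρ)
    (hm : ρ / Real.sqrt 2 ≤ m)
    (hXlaw : μ.map X = gaussianReal m (s ^ 2))
    (hYlaw : μ.map Y = gaussianReal 0 (s ^ 2)) :
    ENNReal.ofReal (ρ ^ 2 / (Real.pi * (s : ℝ) ^ 2) *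
        Real.exp (-(ρ ^ 2 + ρ * m * Real.sqrt 2 + m ^ 2) / (2 * (s : ℝ) ^ 2))) ≤
      μ {ω | X ω ^ 2 + Y ω ^ 2 ≤ ρ ^ 2} :=
  gaussian_disk_hit_lower_bound_general μ X Y hX hY hindep m ρ s hs hρ hm hXlaw hYlaw
end

section
/- For all real φ > 0 and α > 0, (1/(2π))·∫_{−π}^{π} √(φ² − 2φα·cos(β) + α²) dβ > φ. In words: a single step of length α taken in a uniformly random direction from a point at distance φ from the origin in ℝ² strictly increases the expected distance to the origin. -/
/-- A step of length `α` in a uniformly random direction from distance `φ`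
strictly increases the expected distance to the origin:
`(1/(2π)) ∫_{−π}^{π} √(φ² − 2φα cos β + α²) dβ > φ`. -/
theorem uniform_step_increases_expected_distance (φ α : ℝ) (hφ : 0 < φ) (hα : 0 < α) :
    φ < (1 / (2 * Real.pi)) *
      ∫ β in (-Real.pi)..Real.pi, Real.sqrt (φ ^ 2 - 2 * φ * α * Real.cos β + α ^ 2) := by
  have hπ := Real.pi_pos
  have hab : -Real.pi < Real.pi := by linarith
  have key : (∫ β in (-Real.pi)..Real.pi, (φ - α * Real.cos β)) <
      ∫ β in (-Real.pi)..Real.pi, Real.sqrt (φ ^ 2 - 2 * φ * α * Real.cos β + α ^ 2) := by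
    apply intervalIntegral.integral_lt_integral_of_continuousOn_of_le_of_exists_lt hab
    · exact (continuous_const.sub (continuous_const.mul Real.continuous_cos)).continuousOn
    · exact (Real.continuous_sqrt.comp (by continuity)).continuousOn
    · intro x _
      have h1 : φ - α * Real.cos x ≤ |φ - α * Real.cos x| := le_abs_self _
      have h2 : |φ - α * Real.cos x| = Real.sqrt ((φ - α * Real.cos x) ^ 2) :=
        (Real.sqrt_sq_eq_abs _).symm
      have hc := Real.neg_one_le_cos x
      have hc' := Real.cos_le_one x
      have h3 : (φ - α * Real.cos x) ^ 2 ≤ φ ^ 2 - 2 * φ * α * Real.cos x + α ^ 2 := by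
        nlinarith [mul_le_mul_of_nonneg_left (Real.cos_sq_le_one x) (sq_nonneg α)]
      calc φ - α * Real.cos x ≤ Real.sqrt ((φ - α * Real.cos x) ^ 2) := h2 ▸ h1
        _ ≤ _ := Real.sqrt_le_sqrt h3
    · refine ⟨Real.pi / 2, ⟨by linarith, by linarith⟩, ?_⟩
      rw [Real.cos_pi_div_two]
      rw [show φ ^ 2 - 2 * φ * α * 0 + α ^ 2 = φ ^ 2 + α ^ 2 by ring]
      have : φ - α * 0 = φ := by ring
      rw [this]
      exact (Real.lt_sqrt hφ.le).mpr (by nlinarith)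
  have hval : (∫ β in (-Real.pi)..Real.pi, (φ - α * Real.cos β)) = 2 * Real.pi * φ := by
    rw [intervalIntegral.integral_sub intervalIntegrable_const
      ((intervalIntegral.intervalIntegrable_cos).const_mul α)]
    rw [intervalIntegral.integral_const, intervalIntegral.integral_const_mul,
      integral_cos]
    simp only [smul_eq_mul, Real.sin_neg, Real.sin_pi]
    ring
  rw [hval] at key
  calc φ = (1 / (2 * Real.pi)) * (2 * Real.pi * φ) := by field_simp
    _ < _ := mul_lt_mul_of_pos_left key (by positivity)
end
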